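/- Non-existence of equivariant symplectomorphism (Example 2.10, conclusion): let n ≥ 2 and 1 ≤ k ≤ n−1, and consider on the cylinder Z^{2n} ⊆ ℂ^n the two ℝ^k-actions φ₁(t,z) = (e^{2it₁}z₁, …, e^{2it_k}z_k, z_{k+1}, …, z_n) and φ₂(t,z) = (z₁, e^{2it₁}z₂, …, e^{2it_k}z_{k+1}, z_{k+2}, …, z_n). Then there is no map ρ : Z^{2n} → Z^{2n} that is bijective, C^∞ with C^∞ inverse, satisfies ω_n(Dρ(z)u, Dρ(z)v) = ω_n(u,v) for all z ∈ Z^{2n} and u,v ∈ ℂ^n, and for which there exists a linear automorphism Λ of ℝ^k with ρ(φ₁(t,z)) = φ₂(Λt, ρ(z)) for all t ∈ ℝ^k and z ∈ Z^{2n}. In other words, (Z^{2n}, ω_n, φ₁) and (Z^{2n}, ω_n, φ₂) are not ℝ^k-equivariantly symplectomorphic. -/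

import Mathlib

/-!
Statement 2: Non-existence of an ℝ^k-equivariant symplectomorphism between the two
standard ℝ^k-actions φ₁, φ₂ on the cylinder Z^{2n} ⊆ ℂ^n (n ≥ 2, 1 ≤ k ≤ n-1).
-/

noncomputable section

/-- The standard symplectic form on `ℂ^N`: the imaginary part of the Hermitian inner
product (conjugate-linear in the first argument). -/
def symplForm {N : ℕ} (u v : EuclideanSpace ℂ (Fin N)) : ℝ :=
  (inner ℂ u v : ℂ).im

/-- The action `φ₁` of `ℝ^k` on `ℂ^n`: rotation of the first `k` coordinates,
`φ₁(t,z) = (e^{2it₁}z₁, …, e^{2it_k}z_k, z_{k+1}, …, z_n)`. -/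
def actOne (k : ℕ) {n : ℕ} (t : Fin k → ℝ) (z : EuclideanSpace ℂ (Fin n)) :
    EuclideanSpace ℂ (Fin n) :=
  WithLp.toLp 2 (fun i : Fin n => if h : (i : ℕ) < k then
    Complex.exp ((2 * t ⟨i, h⟩ : ℝ) * Complex.I) * z i
  else z i)

/-- The action `φ₂` of `ℝ^k` on `ℂ^n`: rotation of coordinates `2, …, k+1`,
`φ₂(t,z) = (z₁, e^{2it₁}z₂, …, e^{2it_k}z_{k+1}, z_{k+2}, …, z_n)`. -/
def actTwo (k : ℕ) {n : ℕ} (t : Fin k → ℝ) (z : EuclideanSpace ℂ (Fin n)) :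
    EuclideanSpace ℂ (Fin n) :=
  WithLp.toLp 2 (fun i : Fin n => if h : 1 ≤ (i : ℕ) ∧ (i : ℕ) ≤ k then
    Complex.exp ((2 * t ⟨(i : ℕ) - 1, by omega⟩ : ℝ) * Complex.I) * z i
  else z i)

/-- The open cylinder `Z^{2n} = {z ∈ ℂ^n : |z₁| < 1}`. -/
def cylinder (n : ℕ) : Set (EuclideanSpace ℂ (Fin n)) :=
  {z | ∀ i : Fin n, (i : ℕ) = 0 → ‖z i‖ < 1}

namespace NoEquivAux

open Complex Finset

variable {n k : ℕ}

def idx0 (hn : 2 ≤ n) : Fin n := ⟨0, by omega⟩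

def idx (hkn : k ≤ n - 1) (j : Fin k) : Fin n := ⟨(j : ℕ) + 1, by have := j.2; omega⟩

lemma idx_inj (hkn : k ≤ n - 1) {i j : Fin k} (h : idx hkn i = idx hkn j) : i = j := by
  have := congrArg Fin.val h
  simp only [idx] at this
  exact Fin.ext (by omega)

def Evec (hn : 2 ≤ n) (z : EuclideanSpace ℂ (Fin n)) : EuclideanSpace ℂ (Fin n) :=
  EuclideanSpace.single (idx0 hn) (z (idx0 hn))

def Xvec (hn : 2 ≤ n) (z : EuclideanSpace ℂ (Fin n)) : EuclideanSpace ℂ (Fin n) :=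
  (2 * Complex.I) • Evec hn z

def Yvec (hkn : k ≤ n - 1) (m : Fin k → ℝ) (w : EuclideanSpace ℂ (Fin n)) :
    EuclideanSpace ℂ (Fin n) :=
  ∑ j : Fin k, ((2 * (m j : ℂ)) * Complex.I) •
    EuclideanSpace.single (idx hkn j) (w (idx hkn j))

def H1 (hn : 2 ≤ n) (z : EuclideanSpace ℂ (Fin n)) : ℝ := Complex.normSq (z (idx0 hn))

def H2 (hkn : k ≤ n - 1) (m : Fin k → ℝ) (w : EuclideanSpace ℂ (Fin n)) : ℝ :=
  ∑ j : Fin k, m j * Complex.normSq (w (idx hkn j))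

/-- derivative of `normSq` at `a`. -/
def nsqD (a : ℂ) : ℂ →L[ℝ] ℝ := (2 * a.re) • Complex.reCLM + (2 * a.im) • Complex.imCLM

lemma nsqD_apply (a v : ℂ) : nsqD a v = 2 * ((starRingEnd ℂ) a * v).re := by
  simp [nsqD, Complex.mul_re]
  ring

lemma hasFDerivAt_normSq (a : ℂ) :
    HasFDerivAt (fun x : ℂ => Complex.normSq x) (nsqD a) a := by
  have h : HasFDerivAt (fun x : ℂ => x.re * x.re + x.im * x.im)
      ((a.re • Complex.reCLM + a.re • Complex.reCLM) +
        (a.im • Complex.imCLM + a.im • Complex.imCLM)) a := by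
    exact (Complex.reCLM.hasFDerivAt.mul Complex.reCLM.hasFDerivAt).add
      (Complex.imCLM.hasFDerivAt.mul Complex.imCLM.hasFDerivAt)
  have heq : (fun x : ℂ => Complex.normSq x) = fun x : ℂ => x.re * x.re + x.im * x.im := by
    funext x; simp [Complex.normSq_apply]
  rw [heq]
  convert h using 1
  ext v
  simp [nsqD]
  ring

lemma euclid_sum_apply {ι : Type*} [Fintype ι] {N : ℕ}
    (f : ι → EuclideanSpace ℂ (Fin N)) (i : Fin N) :
    (∑ j, f j) i = ∑ j, f j i := by
  rw [WithLp.ofLp_sum, Finset.sum_apply]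

lemma K1_aux : True := trivial

/-- derivative of `H1`. -/
def K1 (hn : 2 ≤ n) (z : EuclideanSpace ℂ (Fin n)) : EuclideanSpace ℂ (Fin n) →L[ℝ] ℝ :=
  (nsqD (z (idx0 hn))).comp
    ((EuclideanSpace.proj (idx0 hn) : EuclideanSpace ℂ (Fin n) →L[ℂ] ℂ).restrictScalars ℝ)

lemma K1_apply (hn : 2 ≤ n) (z v : EuclideanSpace ℂ (Fin n)) :
    K1 hn z v = 2 * ((starRingEnd ℂ) (z (idx0 hn)) * v (idx0 hn)).re := by
  simp [K1, nsqD_apply]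

lemma hasFDerivAt_H1 (hn : 2 ≤ n) (z : EuclideanSpace ℂ (Fin n)) :
    HasFDerivAt (H1 hn) (K1 hn z) z := by
  exact (hasFDerivAt_normSq (z (idx0 hn))).comp z
    (((EuclideanSpace.proj (idx0 hn) : EuclideanSpace ℂ (Fin n) →L[ℂ] ℂ).restrictScalars
      ℝ).hasFDerivAt)

/-- derivative of `H2 m`. -/
def K2 (hkn : k ≤ n - 1) (m : Fin k → ℝ) (w : EuclideanSpace ℂ (Fin n)) :
    EuclideanSpace ℂ (Fin n) →L[ℝ] ℝ :=
  ∑ j : Fin k, m j • ((nsqD (w (idx hkn j))).comp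
    ((EuclideanSpace.proj (idx hkn j) : EuclideanSpace ℂ (Fin n) →L[ℂ] ℂ).restrictScalars ℝ))

lemma K2_apply (hkn : k ≤ n - 1) (m : Fin k → ℝ) (w v : EuclideanSpace ℂ (Fin n)) :
    K2 hkn m w v
      = ∑ j : Fin k, m j * (2 * ((starRingEnd ℂ) (w (idx hkn j)) * v (idx hkn j)).re) := by
  simp [K2, nsqD_apply]

lemma hasFDerivAt_H2 (hkn : k ≤ n - 1) (m : Fin k → ℝ) (w : EuclideanSpace ℂ (Fin n)) :
    HasFDerivAt (H2 hkn m) (K2 hkn m w) w := by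
  apply HasFDerivAt.fun_sum
  intro j _
  exact ((hasFDerivAt_normSq (w (idx hkn j))).comp w
    (((EuclideanSpace.proj (idx hkn j) : EuclideanSpace ℂ (Fin n) →L[ℂ] ℂ).restrictScalars
      ℝ).hasFDerivAt)).const_mul (m j)

lemma symplForm_Xvec (hn : 2 ≤ n) (z v : EuclideanSpace ℂ (Fin n)) :
    symplForm (Xvec hn z) v = - K1 hn z v := by
  rw [K1_apply]
  unfold symplForm Xvec Evec
  rw [inner_smul_left, EuclideanSpace.inner_single_left]
  simp [Complex.mul_im, Complex.mul_re]

lemma symplForm_Yvec (hkn : k ≤ n - 1) (m : Fin k → ℝ) (w v : EuclideanSpace ℂ (Fin n)) :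
    symplForm (Yvec hkn m w) v = - K2 hkn m w v := by
  rw [K2_apply]
  unfold symplForm Yvec
  rw [sum_inner]
  rw [Complex.im_sum, ← Finset.sum_neg_distrib]
  apply Finset.sum_congr rfl
  intro j _
  rw [inner_smul_left, EuclideanSpace.inner_single_left]
  simp [Complex.mul_im, Complex.mul_re]
  ring

lemma actOne_line (hn : 2 ≤ n) (hk : 1 ≤ k) (θ : ℝ) (z : EuclideanSpace ℂ (Fin n)) :
    actOne k (θ • (Pi.single ⟨0, hk⟩ 1 : Fin k → ℝ)) z
      = z + (Complex.exp ((2 * Complex.I) * θ) - 1) • Evec hn z := by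
  ext i
  have hrhs : (z + (Complex.exp ((2 * Complex.I) * θ) - 1) • Evec hn z) i
      = z i + (Complex.exp ((2 * Complex.I) * θ) - 1) *
          (if i = idx0 hn then z (idx0 hn) else 0) := by
    simp [Evec, EuclideanSpace.single_apply]
  rw [hrhs]
  unfold actOne
  simp only [PiLp.toLp_apply]
  by_cases hi0 : (i : ℕ) = 0
  · have hidx : i = idx0 hn := Fin.ext (by simpa [idx0] using hi0)
    have hik : (i : ℕ) < k := by omega
    rw [dif_pos hik, if_pos hidx]
    have hsingle : (θ • (Pi.single ⟨0, hk⟩ 1 : Fin k → ℝ)) ⟨(i : ℕ), hik⟩ = θ := by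
      have h1 : (⟨(i : ℕ), hik⟩ : Fin k) = ⟨0, hk⟩ := Fin.ext hi0
      rw [h1]
      simp
    rw [hsingle, ← hidx]
    have : ((2 * θ : ℝ) : ℂ) * Complex.I = 2 * Complex.I * θ := by push_cast; ring
    rw [this]
    ring
  · have hidx : ¬ (i = idx0 hn) := by
      intro h; exact hi0 (by simpa [idx0] using congrArg Fin.val h)
    rw [if_neg hidx]
    by_cases hik : (i : ℕ) < k
    · rw [dif_pos hik]
      have hsingle : (θ • (Pi.single ⟨0, hk⟩ 1 : Fin k → ℝ)) ⟨(i : ℕ), hik⟩ = 0 := by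
        have h1 : (⟨(i : ℕ), hik⟩ : Fin k) ≠ ⟨0, hk⟩ := by
          intro h; exact hi0 (by simpa using congrArg Fin.val h)
        simp [Pi.single_apply, h1]
      rw [hsingle]
      norm_num
    · rw [dif_neg hik]
      ring
 
lemma actTwo_line (hkn : k ≤ n - 1) (m : Fin k → ℝ) (θ : ℝ) (w : EuclideanSpace ℂ (Fin n)) :
    actTwo k (θ • m) w
      = w + ∑ j : Fin k, (Complex.exp ((2 * (m j : ℂ) * Complex.I) * θ) - 1) •
          EuclideanSpace.single (idx hkn j) (w (idx hkn j)) := by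
  ext i
  have hrhs : (w + ∑ j : Fin k, (Complex.exp ((2 * (m j : ℂ) * Complex.I) * θ) - 1) •
          EuclideanSpace.single (idx hkn j) (w (idx hkn j))) i
      = w i + ∑ j : Fin k, (Complex.exp ((2 * (m j : ℂ) * Complex.I) * θ) - 1) *
          (if i = idx hkn j then w (idx hkn j) else 0) := by
    rw [PiLp.add_apply, euclid_sum_apply]
    simp [EuclideanSpace.single_apply]
  rw [hrhs]
  unfold actTwo
  simp only [PiLp.toLp_apply]
  by_cases hi : 1 ≤ (i : ℕ) ∧ (i : ℕ) ≤ k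
  · have hj0lt : (i : ℕ) - 1 < k := by omega
    have hidx : i = idx hkn ⟨(i : ℕ) - 1, hj0lt⟩ := Fin.ext (by simp [idx]; omega)
    have hsum : ∑ j : Fin k, (Complex.exp ((2 * (m j : ℂ) * Complex.I) * θ) - 1) *
          (if i = idx hkn j then w (idx hkn j) else 0)
        = (Complex.exp ((2 * (m ⟨(i : ℕ) - 1, hj0lt⟩ : ℂ) * Complex.I) * θ) - 1) * w i := by
      rw [Finset.sum_eq_single (⟨(i : ℕ) - 1, hj0lt⟩ : Fin k)]
      · rw [if_pos hidx, ← hidx]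
      · intro j _ hj
        have hne : ¬ (i = idx hkn j) := by
          intro h
          exact hj (idx_inj hkn (h.symm.trans hidx))
        simp [hne]
      · intro h; exact absurd (Finset.mem_univ _) h
    rw [hsum, dif_pos hi]
    have harg : (((2 * ((θ • m) ⟨(i : ℕ) - 1, by omega⟩) : ℝ)) : ℂ) * Complex.I
        = (2 * (m ⟨(i : ℕ) - 1, hj0lt⟩ : ℂ) * Complex.I) * θ := by
      have h1 : (θ • m) ⟨(i : ℕ) - 1, hj0lt⟩ = θ * m ⟨(i : ℕ) - 1, hj0lt⟩ := rfl
      rw [h1]; push_cast; ring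
    rw [harg]
    ring
  · have hsum : ∑ j : Fin k, (Complex.exp ((2 * (m j : ℂ) * Complex.I) * θ) - 1) *
          (if i = idx hkn j then w (idx hkn j) else 0) = 0 := by
      apply Finset.sum_eq_zero
      intro j _
      have hne : ¬ (i = idx hkn j) := by
        intro h
        have := congrArg Fin.val h
        simp [idx] at this
        omega
      simp [hne]
    rw [hsum, dif_neg hi]
    ring

lemma hasDerivAt_lineOne (hn : 2 ≤ n) (z : EuclideanSpace ℂ (Fin n)) :
    HasDerivAt (fun θ : ℝ => z + (Complex.exp ((2 * Complex.I) * θ) - 1) • Evec hn z)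
      (Xvec hn z) 0 := by
  have h1 : HasDerivAt (fun θ : ℝ => ((2 * Complex.I) * θ : ℂ)) (2 * Complex.I) 0 := by
    simpa using (Complex.ofRealCLM.hasDerivAt (x := (0 : ℝ))).const_mul (2 * Complex.I)
  have h2 : HasDerivAt (fun θ : ℝ => Complex.exp ((2 * Complex.I) * θ) - 1)
      (2 * Complex.I) 0 := by
    have := h1.cexp
    simpa using this.sub_const 1
  have h3 := (h2.smul_const (Evec hn z)).const_add z
  simpa [Xvec] using h3

lemma hasDerivAt_lineTwo (hkn : k ≤ n - 1) (m : Fin k → ℝ) (w : EuclideanSpace ℂ (Fin n)) :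
    HasDerivAt (fun θ : ℝ => w + ∑ j : Fin k,
        (Complex.exp ((2 * (m j : ℂ) * Complex.I) * θ) - 1) •
          EuclideanSpace.single (idx hkn j) (w (idx hkn j)))
      (Yvec hkn m w) 0 := by
  have h : ∀ j : Fin k, HasDerivAt (fun θ : ℝ =>
        (Complex.exp ((2 * (m j : ℂ) * Complex.I) * θ) - 1) •
          EuclideanSpace.single (idx hkn j) (w (idx hkn j)))
      (((2 * (m j : ℂ)) * Complex.I) • EuclideanSpace.single (idx hkn j) (w (idx hkn j))) 0 := by
    intro j
    have h1 : HasDerivAt (fun θ : ℝ => ((2 * (m j : ℂ) * Complex.I) * θ : ℂ))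
        (2 * (m j : ℂ) * Complex.I) 0 := by
      simpa using (Complex.ofRealCLM.hasDerivAt (x := (0 : ℝ))).const_mul
        (2 * (m j : ℂ) * Complex.I)
    have h2 := (h1.cexp).sub_const 1
    have h3 := h2.smul_const (EuclideanSpace.single (idx hkn j) (w (idx hkn j)))
    simpa using h3
  have hsum := HasDerivAt.sum (fun j (_ : j ∈ Finset.univ) => h j)
  simpa [Yvec] using hsum.const_add w

lemma cylinder_eq (hn : 2 ≤ n) :
    cylinder n = (fun z : EuclideanSpace ℂ (Fin n) => z (idx0 hn)) ⁻¹' (Metric.ball (0 : ℂ) 1) := by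
  ext z
  constructor
  · intro hz
    simpa [Complex.dist_eq] using hz (idx0 hn) rfl
  · intro hz i hi
    have : i = idx0 hn := Fin.ext (by simpa [idx0] using hi)
    rw [this]
    simpa [Complex.dist_eq] using hz

lemma cylinder_isOpen (hn : 2 ≤ n) : IsOpen (cylinder n) := by
  rw [cylinder_eq hn]
  exact Metric.isOpen_ball.preimage
    ((EuclideanSpace.proj (idx0 hn) : EuclideanSpace ℂ (Fin n) →L[ℂ] ℂ).continuous)

lemma cylinder_convex (hn : 2 ≤ n) : Convex ℝ (cylinder n) := by
  rw [cylinder_eq hn]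
  exact (convex_ball (0 : ℂ) 1).linear_preimage
    (((EuclideanSpace.proj (idx0 hn) : EuclideanSpace ℂ (Fin n) →L[ℂ] ℂ).restrictScalars
      ℝ).toLinearMap)

lemma zero_mem_cylinder : (0 : EuclideanSpace ℂ (Fin n)) ∈ cylinder n := by
  intro i _
  norm_num

end NoEquivAux

open NoEquivAux

/-- `(Z^{2n}, ω, φ₁)` and `(Z^{2n}, ω, φ₂)` are not `ℝ^k`-equivariantly
symplectomorphic: there is no symplectomorphism `ρ` of the cylinder intertwining
`φ₁` and `φ₂` up to a linear automorphism `Λ` of `ℝ^k`. -/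
theorem no_equivariant_symplectomorphism_of_cylinder_actions
    (n k : ℕ) (hn : 2 ≤ n) (hk : 1 ≤ k) (hkn : k ≤ n - 1)
    (ρ σ : EuclideanSpace ℂ (Fin n) → EuclideanSpace ℂ (Fin n))
    (hρsmooth : ContDiffOn ℝ (⊤ : ℕ∞) ρ (cylinder n))
    (hσsmooth : ContDiffOn ℝ (⊤ : ℕ∞) σ (cylinder n))
    (hρmaps : Set.MapsTo ρ (cylinder n) (cylinder n))
    (hσmaps : Set.MapsTo σ (cylinder n) (cylinder n))
    (hleft : ∀ z ∈ cylinder n, σ (ρ z) = z)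
    (hright : ∀ z ∈ cylinder n, ρ (σ z) = z)
    (hsymp : ∀ z ∈ cylinder n, ∀ u v : EuclideanSpace ℂ (Fin n),
      symplForm (fderiv ℝ ρ z u) (fderiv ℝ ρ z v) = symplForm u v)
    (Λ : (Fin k → ℝ) ≃ₗ[ℝ] (Fin k → ℝ))
    (hequiv : ∀ (t : Fin k → ℝ), ∀ z ∈ cylinder n,
      ρ (actOne k t z) = actTwo k (Λ t) (ρ z)) :
    False := by
  classical
  have hopen := cylinder_isOpen (n := n) hn
  have hconv := cylinder_convex (n := n) hn
  have h0 : (0 : EuclideanSpace ℂ (Fin n)) ∈ cylinder n := zero_mem_cylinder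
  obtain ⟨m, hmdef⟩ : ∃ m : Fin k → ℝ, m = Λ (Pi.single ⟨0, hk⟩ (1 : ℝ)) := ⟨_, rfl⟩
  obtain ⟨j₀, hj₀⟩ : ∃ j, m j ≠ 0 := by
    by_contra hcon
    push_neg at hcon
    have hm0 : m = 0 := funext hcon
    have he0 : (Pi.single ⟨0, hk⟩ (1 : ℝ) : Fin k → ℝ) = 0 := by
      apply Λ.injective
      rw [← hmdef, hm0]
      simp
    have h1 : (1 : ℝ) = 0 := by
      have := congrFun he0 ⟨0, hk⟩
      simpa using this
    norm_num at h1
  have hdiffat : ∀ z ∈ cylinder n, HasFDerivAt ρ (fderiv ℝ ρ z) z := by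
    intro z hz
    exact ((hρsmooth.differentiableOn (by simp)).differentiableAt (hopen.mem_nhds hz)).hasFDerivAt
  -- the differential of ρ maps the generator X to the generator Y
  have hXY : ∀ z ∈ cylinder n, fderiv ℝ ρ z (Xvec hn z) = Yvec hkn m (ρ z) := by
    intro z hz
    have hγ := hasDerivAt_lineOne hn z
    have hz0 : z + (Complex.exp ((2 * Complex.I) * ((0 : ℝ) : ℂ)) - 1) • Evec hn z = z := by
      simp
    have hρat : HasFDerivAt ρ (fderiv ℝ ρ z)
        (z + (Complex.exp ((2 * Complex.I) * ((0 : ℝ) : ℂ)) - 1) • Evec hn z) := by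
      rw [hz0]; exact hdiffat z hz
    have hA : HasDerivAt
        (fun θ : ℝ => ρ (z + (Complex.exp ((2 * Complex.I) * θ) - 1) • Evec hn z))
        (fderiv ℝ ρ z (Xvec hn z)) 0 :=
      hρat.comp_hasDerivAt 0 hγ
    have hfun : (fun θ : ℝ => ρ (z + (Complex.exp ((2 * Complex.I) * θ) - 1) • Evec hn z))
        = fun θ : ℝ => ρ z + ∑ j : Fin k,
            (Complex.exp ((2 * (m j : ℂ) * Complex.I) * θ) - 1) •
              EuclideanSpace.single (idx hkn j) ((ρ z) (idx hkn j)) := by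
      funext θ
      rw [← actOne_line hn hk θ z, hequiv _ z hz]
      have hΛ : Λ (θ • (Pi.single ⟨0, hk⟩ (1 : ℝ) : Fin k → ℝ)) = θ • m := by
        rw [map_smul, ← hmdef]
      rw [hΛ, actTwo_line hkn m θ (ρ z)]
    rw [hfun] at hA
    exact hA.unique (hasDerivAt_lineTwo hkn m (ρ z))
  -- H2 ∘ ρ - H1 has vanishing derivative on the cylinder
  have hzero : ∀ z ∈ cylinder n, HasFDerivAt (fun z => H2 hkn m (ρ z) - H1 hn z)
      (0 : EuclideanSpace ℂ (Fin n) →L[ℝ] ℝ) z := by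
    intro z hz
    have hD := hdiffat z hz
    have h2 : HasFDerivAt (fun z => H2 hkn m (ρ z))
        ((K2 hkn m (ρ z)).comp (fderiv ℝ ρ z)) z := (hasFDerivAt_H2 hkn m (ρ z)).comp z hD
    have hKeq : (K2 hkn m (ρ z)).comp (fderiv ℝ ρ z) = K1 hn z := by
      apply ContinuousLinearMap.ext
      intro v
      have e1 : K2 hkn m (ρ z) (fderiv ℝ ρ z v)
          = - symplForm (Yvec hkn m (ρ z)) (fderiv ℝ ρ z v) := by
        rw [symplForm_Yvec]; ring
      rw [ContinuousLinearMap.comp_apply, e1, ← hXY z hz, hsymp z hz (Xvec hn z) v,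
        symplForm_Xvec hn z v]
      ring
    rw [hKeq] at h2
    have h3 := h2.fun_sub (hasFDerivAt_H1 hn z)
    simpa using h3
  -- hence it is constant on the (convex) cylinder
  have hconst : ∀ z ∈ cylinder n,
      H2 hkn m (ρ z) - H1 hn z = H2 hkn m (ρ 0) - H1 hn 0 := by
    intro z hz
    have hb := Convex.norm_image_sub_le_of_norm_hasFDerivWithin_le (C := 0)
      (fun x hx => (hzero x hx).hasFDerivWithinAt)
      (fun x _ => by simp) hconv h0 hz
    have hb' : ‖(H2 hkn m (ρ z) - H1 hn z) - (H2 hkn m (ρ 0) - H1 hn 0)‖ ≤ 0 := by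
      simpa using hb
    have := norm_le_zero_iff.mp hb'
    exact sub_eq_zero.mp this
  have hH10 : H1 hn (0 : EuclideanSpace ℂ (Fin n)) = 0 := by simp [H1]
  -- the two bounds
  have key : ∀ w ∈ cylinder n, H2 hkn m (ρ 0) ≤ H2 hkn m w ∧
      H2 hkn m w < 1 + H2 hkn m (ρ 0) := by
    intro w hw
    have hσw : σ w ∈ cylinder n := hσmaps hw
    have h := hconst (σ w) hσw
    rw [hright w hw, hH10, sub_zero] at h
    have h1nn : 0 ≤ H1 hn (σ w) := Complex.normSq_nonneg _
    have h1lt : H1 hn (σ w) < 1 := by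
      have habs := hσw (idx0 hn) rfl
      have hnsq : Complex.normSq (σ w (idx0 hn)) = ‖σ w (idx0 hn)‖ ^ 2 :=
        (Complex.sq_norm _).symm
      have h0le : 0 ≤ ‖σ w (idx0 hn)‖ := norm_nonneg _
      rw [H1, hnsq]
      nlinarith
    constructor <;> linarith
  set c := H2 hkn m (ρ 0) with hc
  have heval : ∀ M : ℝ, H2 hkn m (EuclideanSpace.single (idx hkn j₀) (M : ℂ)) = m j₀ * M ^ 2 := by
    intro M
    rw [H2, Finset.sum_eq_single j₀]
    · rw [EuclideanSpace.single_apply, if_pos rfl, Complex.normSq_ofReal]; ring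
    · intro j _ hj
      have hne : ¬ (idx hkn j = idx hkn j₀) := fun h => hj (idx_inj hkn h)
      rw [EuclideanSpace.single_apply, if_neg hne]
      simp
    · intro h; exact absurd (Finset.mem_univ _) h
  have hWcyl : ∀ M : ℝ, EuclideanSpace.single (idx hkn j₀) (M : ℂ) ∈ cylinder n := by
    intro M i hi
    have hne : ¬ (i = idx hkn j₀) := by
      intro h
      have hv := congrArg Fin.val h
      simp [idx] at hv
      omega
    rw [EuclideanSpace.single_apply, if_neg hne]
    norm_num
  rcases lt_or_gt_of_ne hj₀ with hneg | hpos
  · have hnn : 0 ≤ (1 + |c|) / (-(m j₀)) := div_nonneg (by positivity) (by linarith)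
    have hM2 : Real.sqrt ((1 + |c|) / (-(m j₀))) ^ 2 = (1 + |c|) / (-(m j₀)) :=
      Real.sq_sqrt hnn
    have hkey := (key _ (hWcyl (Real.sqrt ((1 + |c|) / (-(m j₀)))))).1
    rw [heval, hM2] at hkey
    have hval : m j₀ * ((1 + |c|) / (-(m j₀))) = -(1 + |c|) := by
      rw [div_neg, mul_neg, mul_div_assoc', mul_comm, mul_div_assoc, div_self hj₀, mul_one]
    rw [hval] at hkey
    have := neg_abs_le c
    linarith
  · have hnn : 0 ≤ (1 + |c|) / (m j₀) := div_nonneg (by positivity) (by linarith)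
    have hM2 : Real.sqrt ((1 + |c|) / (m j₀)) ^ 2 = (1 + |c|) / (m j₀) :=
      Real.sq_sqrt hnn
    have hkey := (key _ (hWcyl (Real.sqrt ((1 + |c|) / (m j₀))))).2
    rw [heval, hM2] at hkey
    have hval : m j₀ * ((1 + |c|) / (m j₀)) = 1 + |c| := by
      rw [mul_div_assoc', mul_comm, mul_div_assoc, div_self hj₀, mul_one]
    rw [hval] at hkey
    have := le_abs_self c
    linarith
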